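/- Let G be a connected simple graph on n vertices with chromatic number k that consists of exactly two blocks B1 and B2 sharing a single cut vertex, where B1 has n1 vertices and chromatic number k and satisfies π(B1,x) ≤ (x)_↓k·(x−1)^(n1−k) for a natural number x. Then π(G,x) ≤ (x)_↓k·(x−1)^(n−k). More generally, expressed via the complete cutset identity: if G is the union of graphs B1 and B2 with vertex sets intersecting in exactly one vertex, B2 is connected with n2 vertices, χ(B1) = k, and π(B1,x) ≤ (x)_↓k·(x−1)^(n1−k), then π(G,x) ≤ (x)_↓k·(x−1)^(n1+n2−1−k) for every natural number x. -/

import Mathlib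

/-- The number of proper `x`-colourings of `G`. -/
noncomputable def numColorings {V : Type} [Fintype V] (G : SimpleGraph V) (x : ℕ) : ℕ :=
  Nat.card {f : V → Fin x // ∀ ⦃u w : V⦄, G.Adj u w → f u ≠ f w}

/-- Encode `a`, known to be distinct from `b`, as an element of `Fin (x-1)`. -/
def relcode {x : ℕ} (a b : Fin x) (h : a ≠ b) : Fin (x - 1) :=
  if hlt : a.val < b.val then ⟨a.val, by have := b.isLt; omega⟩
  else ⟨a.val - 1, by
    have := a.isLt
    have hne : a.val ≠ b.val := fun hh => h (Fin.ext hh)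
    omega⟩

lemma relcode_inj {x : ℕ} {a a' b b' : Fin x} (h : a ≠ b) (h' : a' ≠ b')
    (hb : b = b') (hc : relcode a b h = relcode a' b' h') : a = a' := by
  subst hb
  unfold relcode at hc
  have hne : a.val ≠ b.val := fun hh => h (Fin.ext hh)
  have hne' : a'.val ≠ b.val := fun hh => h' (Fin.ext hh)
  apply Fin.ext
  by_cases h1 : a.val < b.val <;> by_cases h2 : a'.val < b.val <;>
    simp [h1, h2, Fin.ext_iff] at hc <;> omega

/-- In a connected graph, each vertex `u ≠ v₀` has a neighbour strictly closer to `v₀`. -/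
lemma exists_parent {W : Type} (H : SimpleGraph W) (hc : H.Connected) (v₀ : W)
    (u : W) (hu : u ≠ v₀) :
    ∃ w : W, H.Adj u w ∧ H.dist w v₀ + 1 = H.dist u v₀ := by
  obtain ⟨p, hp⟩ := (hc u v₀).exists_walk_length_eq_dist
  have hpos : 0 < H.dist u v₀ := (hc u v₀).pos_dist_of_ne hu
  cases p with
  | nil => simp at hu
  | cons hadj q =>
    rename_i w
    refine ⟨w, hadj, ?_⟩
    have h1 : H.dist w v₀ ≤ q.length := SimpleGraph.dist_le q
    have h2 : q.length + 1 = H.dist u v₀ := by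
      simpa [SimpleGraph.Walk.length_cons] using hp
    have h3 : H.dist u v₀ ≤ 1 + H.dist w v₀ := by
      calc H.dist u v₀ ≤ H.dist u w + H.dist w v₀ := (hc).dist_triangle
        _ ≤ 1 + H.dist w v₀ := by
            have : H.dist u w ≤ 1 := by
              simpa using SimpleGraph.dist_le (SimpleGraph.Walk.cons hadj SimpleGraph.Walk.nil)
            omega
    omega

/-- A proper colouring of a connected graph is determined by its value at `v₀`
together with the relative codes along parent edges. -/
lemma coloring_determined {W : Type} {H : SimpleGraph W} (hc : H.Connected) {v₀ : W}
    {p : ∀ u : W, u ≠ v₀ → W}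
    (hpadj : ∀ u hu, H.Adj u (p u hu))
    (hpdist : ∀ u hu, H.dist (p u hu) v₀ + 1 = H.dist u v₀)
    {x : ℕ} {f g : W → Fin x}
    (hf : ∀ ⦃u w : W⦄, H.Adj u w → f u ≠ f w)
    (hg : ∀ ⦃u w : W⦄, H.Adj u w → g u ≠ g w)
    (h0 : f v₀ = g v₀)
    (hcode : ∀ u (hu : u ≠ v₀),
      relcode (f u) (f (p u hu)) (hf (hpadj u hu)) =
      relcode (g u) (g (p u hu)) (hg (hpadj u hu))) :
    ∀ u : W, f u = g u := by
  have key : ∀ n : ℕ, ∀ u : W, H.dist u v₀ = n → f u = g u := by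
    intro n
    induction n using Nat.strong_induction_on with
    | _ n ih =>
      intro u hun
      by_cases hu : u = v₀
      · subst hu; exact h0
      · have hd := hpdist u hu
        have hpar : f (p u hu) = g (p u hu) := by
          apply ih (H.dist (p u hu) v₀) _ _ rfl
          have hpos : 0 < H.dist u v₀ := (hc u v₀).pos_dist_of_ne hu
          omega
        exact relcode_inj _ _ hpar (hcode u hu)
  intro u
  exact key (H.dist u v₀) u rfl

/-- Suppose `G` is the union of the subgraphs `B₁ = G[A]` and `B₂ = G[B]` induced on vertex
sets `A` and `B` meeting in exactly one vertex (a cut vertex): `A ∪ B` is the whole vertex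
set, every edge of `G` lies within `A` or within `B`, and `|A ∩ B| = 1`. If `B₂` is
connected, `B₁` has chromatic number `k` and satisfies
`π(B₁,x) ≤ (x)_↓k · (x-1)^(n₁-k)` for a natural number `x` (where `n₁ = |A|`, `n₂ = |B|`),
then `π(G,x) ≤ (x)_↓k · (x-1)^(n₁+n₂-1-k)`. -/
theorem numColorings_le_of_cut_vertex {V : Type} [Fintype V] [DecidableEq V]
    (G : SimpleGraph V) (A B : Finset V) (k n₁ n₂ : ℕ)
    (hU : A ∪ B = Finset.univ) (hI : (A ∩ B).card = 1)
    (hedges : ∀ u v : V, G.Adj u v → (u ∈ A ∧ v ∈ A) ∨ (u ∈ B ∧ v ∈ B))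
    (hn₁ : A.card = n₁) (hn₂ : B.card = n₂)
    (hconn : (G.induce ((B : Finset V) : Set V)).Connected)
    (hchrom : (G.induce ((A : Finset V) : Set V)).chromaticNumber = k)
    (x : ℕ)
    (hB₁ : numColorings (G.induce ((A : Finset V) : Set V)) x ≤
      x.descFactorial k * (x - 1) ^ (n₁ - k)) :
    numColorings G x ≤ x.descFactorial k * (x - 1) ^ (n₁ + n₂ - 1 - k) := by
  classical
  -- the cut vertex
  obtain ⟨v, hv⟩ := Finset.card_eq_one.mp hI
  have hvA : v ∈ A := by
    have : v ∈ A ∩ B := by rw [hv]; exact Finset.mem_singleton_self v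
    exact (Finset.mem_inter.mp this).1
  have hvB : v ∈ B := by
    have : v ∈ A ∩ B := by rw [hv]; exact Finset.mem_singleton_self v
    exact (Finset.mem_inter.mp this).2
  set W := ((B : Finset V) : Set V) with hW
  set H := G.induce W with hH
  have hconn' : H.Connected := hconn
  let v₀ : W := ⟨v, by rw [hW]; exact hvB⟩
  -- parent function in H
  have hpar : ∀ u : W, u ≠ v₀ → ∃ w : W, H.Adj u w ∧ H.dist w v₀ + 1 = H.dist u v₀ :=
    fun u hu => exists_parent H hconn' v₀ u hu
  choose p hpadj hpdist using hpar
  -- the injection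
  let T₁ := {f : ((A : Finset V) : Set V) → Fin x //
    ∀ ⦃u w⦄, (G.induce ((A : Finset V) : Set V)).Adj u w → f u ≠ f w}
  let T₂ := ({u : W // u ≠ v₀} → Fin (x - 1))
  let Φ : {f : V → Fin x // ∀ ⦃u w : V⦄, G.Adj u w → f u ≠ f w} → T₁ × T₂ :=
    fun f =>
      (⟨fun a => f.1 a.1, by
          intro a b hab
          exact f.2 hab⟩,
       fun u => relcode (f.1 u.1.1) (f.1 (p u.1 u.2).1)
         (f.2 (hpadj u.1 u.2)))
  have hΦinj : Function.Injective Φ := by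
    intro f g hfg
    have h1 : ∀ a : ((A : Finset V) : Set V), f.1 a.1 = g.1 a.1 := by
      intro a
      have := congrArg Prod.fst hfg
      exact congrFun (congrArg Subtype.val this) a
    have h2 : ∀ u : {u : W // u ≠ v₀},
        relcode (f.1 u.1.1) (f.1 (p u.1 u.2).1) (f.2 (hpadj u.1 u.2)) =
        relcode (g.1 u.1.1) (g.1 (p u.1 u.2).1) (g.2 (hpadj u.1 u.2)) := by
      intro u
      exact congrFun (congrArg Prod.snd hfg) u
    -- f and g agree on B via coloring_determined
    have hB : ∀ u : W, f.1 u.1 = g.1 u.1 := by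
      apply coloring_determined hconn' hpadj hpdist
        (f := fun u : W => f.1 u.1) (g := fun u : W => g.1 u.1)
        (hf := fun u w h => f.2 h) (hg := fun u w h => g.2 h)
      · exact h1 ⟨v, by simpa using hvA⟩
      · intro u hu
        exact h2 ⟨u, hu⟩
    apply Subtype.ext
    funext y
    have hy : y ∈ A ∪ B := by rw [hU]; exact Finset.mem_univ y
    rcases Finset.mem_union.mp hy with h | h
    · exact h1 ⟨y, by simpa using h⟩
    · exact hB ⟨y, by rw [hW]; exact h⟩
  -- cardinality computations
  have hcard : numColorings G x ≤ Nat.card T₁ * Nat.card T₂ := by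
    have := Nat.card_le_card_of_injective Φ hΦinj
    rwa [Nat.card_prod] at this
  have hT₁ : Nat.card T₁ = numColorings (G.induce ((A : Finset V) : Set V)) x := rfl
  have hWcard : Nat.card W = n₂ := by
    rw [hW, Nat.card_coe_set_eq, Set.ncard_coe_finset, hn₂]
  have hsub : Nat.card {u : W // u ≠ v₀} = n₂ - 1 := by
    have : Nat.card {u : W // u ≠ v₀} = Fintype.card {u : W // u ≠ v₀} :=
      Nat.card_eq_fintype_card
    rw [this, Fintype.card_subtype_compl, Fintype.card_subtype_eq]
    rw [← hWcard, Nat.card_eq_fintype_card]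
  have hT₂ : Nat.card T₂ = (x - 1) ^ (n₂ - 1) := by
    rw [show T₂ = ({u : W // u ≠ v₀} → Fin (x - 1)) from rfl, Nat.card_fun, Nat.card_eq_fintype_card (α := Fin (x-1)),
      Fintype.card_fin, hsub]
  -- k ≤ n₁
  have hk : k ≤ n₁ := by
    have hcol := (G.induce ((A : Finset V) : Set V)).colorable_of_fintype
    have := hcol.chromaticNumber_le
    rw [hchrom] at this
    have hcA : Fintype.card ((A : Finset V) : Set V) = n₁ := by
      rw [← Nat.card_eq_fintype_card, Nat.card_coe_set_eq, Set.ncard_coe_finset, hn₁]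
    rw [hcA] at this
    exact_mod_cast this
  -- n₂ ≥ 1
  have hn₂pos : 1 ≤ n₂ := by
    rw [← hn₂]
    exact Finset.card_pos.mpr ⟨v, hvB⟩
  calc numColorings G x ≤ Nat.card T₁ * Nat.card T₂ := hcard
    _ = numColorings (G.induce ((A : Finset V) : Set V)) x * (x - 1) ^ (n₂ - 1) := by
        rw [hT₁, hT₂]
    _ ≤ (x.descFactorial k * (x - 1) ^ (n₁ - k)) * (x - 1) ^ (n₂ - 1) :=
        Nat.mul_le_mul_right _ hB₁
    _ = x.descFactorial k * (x - 1) ^ (n₁ + n₂ - 1 - k) := by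
        rw [mul_assoc, ← pow_add]
        congr 2
        omega
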